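/- arXiv:math/0304016 — 2 statements merged into one kernel-verified Lean document; each statement's English description precedes it below -/
import Mathlib

section
/- Every polynomial p in F_2[x] can be written in exactly one way in the form p = b^2 + d + x*d^2 with b, d in F_2[x]. -/
open Polynomial

private lemma sq_expand' (b : Polynomial (ZMod 2)) : expand (ZMod 2) 2 b = b ^ 2 := by
  have := Polynomial.map_frobenius_expand 2 b
  rwa [show frobenius (ZMod 2) 2 = RingHom.id _ by ext a; exact (ZMod.pow_card a), map_id] at this

private lemma sq_coeff_odd' (b : Polynomial (ZMod 2)) (k : ℕ) : (b^2).coeff (2*k+1) = 0 := by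
  rw [← sq_expand', coeff_expand (by norm_num)]
  have : ¬ (2 ∣ 2*k+1) := by omega
  simp [this]

private lemma sq_coeff_even' (d : Polynomial (ZMod 2)) (k : ℕ) : (d^2).coeff (2*k) = d.coeff k := by
  rw [← sq_expand', coeff_expand (by norm_num)]
  simp [Nat.mul_div_cancel_left]

private lemma map_zero' (b d : Polynomial (ZMod 2))
    (h : b^2 + d + X * d^2 = 0) : b = 0 ∧ d = 0 := by
  have hd : d = 0 := by
    by_contra hd
    have hcoeff := congrArg (fun q => q.coeff (2 * d.natDegree + 1)) h
    simp only [coeff_add, coeff_zero] at hcoeff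
    rw [sq_coeff_odd', coeff_eq_zero_of_natDegree_lt (by omega),
      show 2 * d.natDegree + 1 = (2 * d.natDegree) + 1 from rfl,
      coeff_X_mul, sq_coeff_even'] at hcoeff
    exact hd (leadingCoeff_eq_zero.mp (by simpa using hcoeff))
  subst hd
  simp only [add_zero, mul_zero, zero_pow, ne_eq, OfNat.ofNat_ne_zero, not_false_iff] at h
  exact ⟨by simpa using h, rfl⟩

private lemma exX' : ∀ n : ℕ, ∃ b d : Polynomial (ZMod 2),
    (X : Polynomial (ZMod 2))^n = b^2 + d + X * d^2 := by
  intro n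
  induction n using Nat.strong_induction_on with
  | _ n ih =>
    rcases Nat.even_or_odd n with ⟨k, hk⟩ | ⟨k, hk⟩
    · exact ⟨X^k, 0, by rw [hk]; ring⟩
    · obtain ⟨b, d, hbd⟩ := ih k (by omega)
      refine ⟨b, d + X^k, ?_⟩
      rw [hk, CharTwo.add_sq,
        show b^2 + (d + X^k) + X*(d^2+(X^k)^2) = (b^2 + d + X*d^2) + X^k + X^(2*k+1) by ring,
        ← hbd, CharTwo.add_self_eq_zero, zero_add]

/-- Every polynomial `p` over `𝔽₂` can be written in exactly one way as
`p = b² + d + x·d²` with `b, d ∈ 𝔽₂[x]`. -/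
theorem stmt_0 (p : Polynomial (ZMod 2)) :
    ∃! bd : Polynomial (ZMod 2) × Polynomial (ZMod 2),
      p = bd.1 ^ 2 + bd.2 + Polynomial.X * bd.2 ^ 2 := by
  have hadd : ∀ b d b' d' : Polynomial (ZMod 2),
      (b+b')^2 + (d+d') + X*(d+d')^2 = (b^2+d+X*d^2) + (b'^2+d'+X*d'^2) := by
    intro b d b' d'
    rw [CharTwo.add_sq, CharTwo.add_sq]; ring
  have hex : ∃ b d : Polynomial (ZMod 2), p = b^2 + d + X*d^2 := by
    induction p using Polynomial.induction_on' with
    | add p q hp hq =>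
      obtain ⟨b, d, hbd⟩ := hp
      obtain ⟨b', d', hbd'⟩ := hq
      exact ⟨b + b', d + d', by rw [hadd, ← hbd, ← hbd']⟩
    | monomial n a =>
      have ha : a = 0 ∨ a = 1 := by revert a; decide
      rcases ha with rfl | rfl
      · exact ⟨0, 0, by simp⟩
      · obtain ⟨b, d, hbd⟩ := exX' n
        exact ⟨b, d, by rw [← X_pow_eq_monomial]; exact hbd⟩
  obtain ⟨b, d, hbd⟩ := hex
  refine ⟨(b, d), hbd, ?_⟩
  rintro ⟨b', d'⟩ hbd'
  simp only at hbd'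
  have h0 : (b'+b)^2 + (d'+d) + X*(d'+d)^2 = 0 := by
    rw [hadd, ← hbd, ← hbd', CharTwo.add_self_eq_zero]
  obtain ⟨hb0, hd0⟩ := map_zero' _ _ h0
  have hb : b' = b := by rwa [add_eq_zero_iff_eq_neg, CharTwo.neg_eq] at hb0
  have hdd : d' = d := by rwa [add_eq_zero_iff_eq_neg, CharTwo.neg_eq] at hd0
  exact Prod.ext hb hdd
end

section
/- The cokernel of psi^2 - 1 : F_2[x] -> F_2[x] (with psi^2(a) = a^2) is isomorphic as an F_2-vector space to the subspace of polynomials sum a_i x^i with a_{2i} = 0 for all i > 0; concretely, every polynomial is congruent modulo the image of psi^2 - 1 to a unique polynomial whose coefficient of x^{2i} vanishes for all i > 0. -/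
/-!
Over a finite field `K` with `q` elements, `a ^ q = expand K q a`, so `ψ^q - 1` is the linear map
`expand K q - id`, and the statement holds for `expand R p - id` over any commutative ring once
`1 < p`. Existence: `x^{pk} ≡ x^k` modulo the image, and `k < pk`, so every monomial reduces.
Uniqueness: if `expand a - a` has no terms `x^{pi}` with `i > 0` but `a` has degree `m > 0`, its
coefficient of `x^{pm}` is the leading coefficient of `a`; hence `a` is constant and
`expand a - a = 0`.
-/

open Polynomial

namespace Polynomial

variable {R : Type*} [CommRing R] {p : ℕ}

def IsExpandReduced (p : ℕ) (g : R[X]) : Prop :=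
  ∀ i, 0 < i → g.coeff (p * i) = 0

theorem IsExpandReduced.sub {g h : R[X]} (hg : IsExpandReduced p g) (hh : IsExpandReduced p h) :
    IsExpandReduced p (g - h) := fun i hi => by
  rw [coeff_sub, hg i hi, hh i hi, sub_zero]

theorem natDegree_eq_zero_of_isExpandReduced_expand_sub_self (hp : 1 < p) {a : R[X]}
    (h : IsExpandReduced p (expand R p a - a)) : a.natDegree = 0 := by
  by_contra hm
  have ha : a ≠ 0 := by rintro rfl; simp at hm
  have hlt : a.natDegree < p * a.natDegree := lt_mul_left (Nat.pos_of_ne_zero hm) hp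
  have hcoeff := h a.natDegree (Nat.pos_of_ne_zero hm)
  rw [coeff_sub, coeff_expand_mul' (by omega), coeff_eq_zero_of_natDegree_lt hlt, sub_zero]
    at hcoeff
  exact leadingCoeff_ne_zero.mpr ha hcoeff

theorem expand_sub_self_eq_zero_of_isExpandReduced (hp : 1 < p) {a : R[X]}
    (h : IsExpandReduced p (expand R p a - a)) : expand R p a - a = 0 := by
  rw [eq_C_of_natDegree_eq_zero (natDegree_eq_zero_of_isExpandReduced_expand_sub_self hp h),
    expand_C, sub_self]

theorem exists_isExpandReduced_monomial_sub (hp : 1 < p) (n : ℕ) (c : R) :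
    ∃ g : R[X], IsExpandReduced p g ∧ ∃ a, monomial n c - g = expand R p a - a := by
  induction n using Nat.strong_induction_on with
  | _ n ih =>
    by_cases hn : ∃ k, 0 < k ∧ n = p * k
    · obtain ⟨k, hk, rfl⟩ := hn
      obtain ⟨g, hg, a, ha⟩ := ih k (lt_mul_left hk hp)
      refine ⟨g, hg, a + monomial k c, ?_⟩
      rw [map_add, expand_monomial, mul_comm k p]
      linear_combination ha
    · refine ⟨monomial n c, fun i hi => ?_, 0, by simp⟩
      rw [coeff_monomial, if_neg]
      rintro rfl
      exact hn ⟨i, hi, rfl⟩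

theorem exists_isExpandReduced_sub (hp : 1 < p) (f : R[X]) :
    ∃ g : R[X], IsExpandReduced p g ∧ ∃ a, f - g = expand R p a - a := by
  induction f using Polynomial.induction_on' with
  | add f₁ f₂ h₁ h₂ =>
    obtain ⟨g₁, hg₁, a₁, ha₁⟩ := h₁
    obtain ⟨g₂, hg₂, a₂, ha₂⟩ := h₂
    refine ⟨g₁ + g₂, fun i hi => ?_, a₁ + a₂, ?_⟩
    · rw [coeff_add, hg₁ i hi, hg₂ i hi, add_zero]
    · rw [map_add]
      linear_combination ha₁ + ha₂
  | monomial n c => exact exists_isExpandReduced_monomial_sub hp n c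

theorem existsUnique_isExpandReduced_sub (hp : 1 < p) (f : R[X]) :
    ∃! g : R[X], IsExpandReduced p g ∧ ∃ a, f - g = expand R p a - a := by
  obtain ⟨g, hg, a, ha⟩ := exists_isExpandReduced_sub hp f
  refine ⟨g, ⟨hg, a, ha⟩, ?_⟩
  rintro g' ⟨hg', a', ha'⟩
  have hdiff : g' - g = expand R p (a - a') - (a - a') := by
    rw [map_sub]
    linear_combination ha - ha'
  have hzero := expand_sub_self_eq_zero_of_isExpandReduced hp (hdiff ▸ hg'.sub hg)
  exact sub_eq_zero.mp (hdiff.trans hzero)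

end Polynomial

/-- Every polynomial over `𝔽₂` is congruent modulo the image of
`ψ² - 1 : a ↦ a² - a` to a unique polynomial whose coefficient of `x^{2i}`
vanishes for all `i > 0`. -/
theorem stmt_2 (p : Polynomial (ZMod 2)) :
    ∃! q : Polynomial (ZMod 2),
      (∀ i : ℕ, 0 < i → q.coeff (2 * i) = 0) ∧
      ∃ a : Polynomial (ZMod 2), p - q = a ^ 2 - a := by
  simpa only [IsExpandReduced, ZMod.expand_card] using
    existsUnique_isExpandReduced_sub (p := 2) one_lt_two p
end
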